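/- arXiv:1405.3676 — 4 statements merged into one kernel-verified Lean document; each statement's English description precedes it below -/
import Mathlib

section
/- Let q > 0 and let I = [0, min(1, 1/√q)). Then the function T_q defined by T_q(x) = (1−q)²/(4(1−x²)(1−qx²)³) + ((1−q)² + 2q(3−q)(1−x²))/(4(1−qx²)³) is strictly increasing on I. -/
open Real Set MeasureTheory

/-- Bessel function of the first kind of order 0, via Bessel's integral. -/
noncomputable def besselJ0 (x : ℝ) : ℝ := (1 / π) * ∫ t in (0:ℝ)..π, Real.cos (x * Real.sin t)

/-- Bessel function of the first kind of order 1, via Bessel's integral. -/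
noncomputable def besselJ1 (x : ℝ) : ℝ := (1 / π) * ∫ t in (0:ℝ)..π, Real.cos (t - x * Real.sin t)

/-- Complete Legendre elliptic integral of the second kind. -/
noncomputable def ellipticE (k : ℝ) : ℝ :=
  ∫ t in (0:ℝ)..(min 1 (1/k)), Real.sqrt ((1 - k^2 * t^2) / (1 - t^2))

/-- Complete Legendre elliptic integral of the first kind. -/
noncomputable def ellipticK (k : ℝ) : ℝ :=
  ∫ t in (0:ℝ)..1, 1 / Real.sqrt ((1 - t^2) * (1 - k^2 * t^2))

/-- The change of variable `S(x) = ∫ₓ¹ √((1−qt²)/(1−t²)) dt`. -/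
noncomputable def Sfun (q x : ℝ) : ℝ := ∫ t in x..1, Real.sqrt ((1 - q * t^2) / (1 - t^2))

/-- The perturbation term `θ∘S` of the Liouville normal form. -/
noncomputable def Tfun (q x : ℝ) : ℝ :=
  (1 - q)^2 / (4 * (1 - x^2) * (1 - q * x^2)^3)
    + ((1 - q)^2 + 2 * q * (3 - q) * (1 - x^2)) / (4 * (1 - q * x^2)^3)

/-- The constant `α_q = (1−q)‖F‖_{L¹([0,S(0)])}`, written after the change of variables. -/
noncomputable def alphaQ (q : ℝ) : ℝ :=
  (1 - q) * ∫ x in (0:ℝ)..1,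
    |1 / (4 * Sfun q x ^ 2) - Tfun q x| * Real.sqrt ((1 - q * x^2) / (1 - x^2))

/-- `Θ(x) = (eˣ − 1)/x`. -/
noncomputable def Theta (x : ℝ) : ℝ := (Real.exp x - 1) / x

/-- Characterization of the prolate spheroidal wave function `ψ_{n,c}` together with its
eigenvalue `χ_n(c)`: positivity of the eigenvalue, regularity, the Sturm–Liouville equation
`((1−x²)ψ')' + (χ − c²x²)ψ = 0` on `[−1,1]`, exactly `n` zeros inside `(−1,1)`,
unit `L²([−1,1])`-norm, positivity at `1`. -/
def IsPSWF (n : ℕ) (c : ℝ) (ψ : ℝ → ℝ) (χ : ℝ) : Prop :=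
  0 < χ ∧
  ContDiffOn ℝ 2 ψ (Set.Icc (-1) 1) ∧
  (∀ x ∈ Set.Icc (-1:ℝ) 1,
    deriv (fun y => (1 - y^2) * deriv ψ y) x + (χ - c^2 * x^2) * ψ x = 0) ∧
  {x ∈ Set.Ioo (-1:ℝ) 1 | ψ x = 0}.ncard = n ∧
  (∫ x in (-1:ℝ)..1, ψ x ^ 2) = 1 ∧
  0 < ψ 1

/-!
Put `a = 1 - x²`, `b = 1 - q x²` and `c = q a`. Differentiating gives
`q · T_q'(x) = x · derivNumerator b c / (2 a² b⁴)`, and on `[0, min(1, 1/√q))` we have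
`0 < b ≤ 1`, `0 < c`. There `derivNumerator b c` is positive: it is `1 - b` times a cubic form
that is a `b`, `c`-weighted sum of squares, plus `b c ((b - c)² + 8 c²)`.
-/

def derivNumerator (b c : ℝ) : ℝ :=
  (1 - b) * (b ^ 3 + b ^ 2 * c - 9 * b * c ^ 2 + 15 * c ^ 3) + b * c * ((b - c) ^ 2 + 8 * c ^ 2)

lemma cubic_form_pos {b c : ℝ} (hb : 0 < b) (hc : 0 < c) :
    0 < b ^ 3 + b ^ 2 * c - 9 * b * c ^ 2 + 15 * c ^ 3 := by
  have hsos : b ^ 3 + b ^ 2 * c - 9 * b * c ^ 2 + 15 * c ^ 3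
      = b * (b - 3 * c) ^ 2 + c * ((7 * b - 9 * c) ^ 2 + 24 * c ^ 2) / 7 := by ring
  rw [hsos]
  positivity

lemma derivNumerator_pos {b c : ℝ} (hb₀ : 0 < b) (hb₁ : b ≤ 1) (hc : 0 < c) :
    0 < derivNumerator b c := by
  have h₁ : 0 ≤ (1 - b) * (b ^ 3 + b ^ 2 * c - 9 * b * c ^ 2 + 15 * c ^ 3) :=
    mul_nonneg (sub_nonneg.2 hb₁) (cubic_form_pos hb₀ hc).le
  have h₂ : 0 < b * c * ((b - c) ^ 2 + 8 * c ^ 2) := by positivity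
  unfold derivNumerator
  linarith

lemma hasDerivAt_Tfun {q x : ℝ} (hq : q ≠ 0) (ha : 1 - x ^ 2 ≠ 0) (hb : 1 - q * x ^ 2 ≠ 0) :
    HasDerivAt (Tfun q)
      (x * derivNumerator (1 - q * x ^ 2) (q * (1 - x ^ 2))
        / (2 * q * (1 - x ^ 2) ^ 2 * (1 - q * x ^ 2) ^ 4)) x := by
  have ha' : HasDerivAt (fun y : ℝ => 1 - y ^ 2) (-(2 * x)) x := by
    simpa using (hasDerivAt_pow 2 x).const_sub 1
  have hb' : HasDerivAt (fun y : ℝ => 1 - q * y ^ 2) (-(q * (2 * x))) x := by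
    simpa using ((hasDerivAt_pow 2 x).const_mul q).const_sub 1
  have h₁ := (hasDerivAt_const x ((1 - q) ^ 2)).fun_div
    ((ha'.const_mul 4).fun_mul (hb'.fun_pow 3)) (by simp [ha, hb])
  have h₂ := ((ha'.const_mul (2 * q * (3 - q))).const_add ((1 - q) ^ 2)).fun_div
    ((hb'.fun_pow 3).const_mul 4) (by simp [hb])
  refine (h₁.fun_add h₂).congr_deriv ?_
  norm_num [derivNumerator]
  field_simp
  ring

lemma sq_lt_one_and_mul_sq_lt_one {q x : ℝ} (hq : 0 < q)
    (hx : x ∈ Ico 0 (min 1 (1 / √q))) : x ^ 2 < 1 ∧ q * x ^ 2 < 1 := by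
  obtain ⟨hx₀, hx⟩ := hx
  have hsq : 0 < √q := sqrt_pos.2 hq
  have hx_sqrt : x * √q < 1 := (lt_div_iff₀ hsq).1 (hx.trans_le (min_le_right _ _))
  refine ⟨pow_lt_one₀ hx₀ (hx.trans_le (min_le_left _ _)) two_ne_zero, ?_⟩
  calc q * x ^ 2 = (x * √q) ^ 2 := by rw [mul_pow, sq_sqrt hq.le, mul_comm]
    _ < 1 := pow_lt_one₀ (by positivity) hx_sqrt two_ne_zero

/-- For `q > 0`, the function `θ∘S` is (strictly) increasing on `[0, min(1, 1/√q))`. -/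
theorem statement0 (q : ℝ) (hq : 0 < q) :
    StrictMonoOn (Tfun q) (Set.Ico 0 (min 1 (1 / Real.sqrt q))) := by
  have hderiv : ∀ x ∈ Ico 0 (min 1 (1 / √q)), HasDerivAt (Tfun q)
      (x * derivNumerator (1 - q * x ^ 2) (q * (1 - x ^ 2))
        / (2 * q * (1 - x ^ 2) ^ 2 * (1 - q * x ^ 2) ^ 4)) x := fun x hx => by
    obtain ⟨ha, hb⟩ := sq_lt_one_and_mul_sq_lt_one hq hx
    exact hasDerivAt_Tfun hq.ne' (by linarith) (by linarith)
  refine strictMonoOn_of_deriv_pos (convex_Ico _ _)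
    (fun x hx => (hderiv x hx).continuousAt.continuousWithinAt) fun x hx => ?_
  rw [interior_Ico] at hx
  have hx' : x ∈ Ico 0 (min 1 (1 / √q)) := Ioo_subset_Ico_self hx
  obtain ⟨ha, hb⟩ := sq_lt_one_and_mul_sq_lt_one hq hx'
  rw [(hderiv x hx').deriv]
  have hnum := derivNumerator_pos (b := 1 - q * x ^ 2) (c := q * (1 - x ^ 2))
    (by linarith) (by nlinarith [sq_nonneg x]) (mul_pos hq (by linarith))
  have ha' : 0 < 1 - x ^ 2 := by linarith
  have hb' : 0 < 1 - q * x ^ 2 := by linarith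
  exact div_pos (mul_pos hx.1 hnum) (by positivity)
end

section
/- Let 0 ≤ q < 1. Then for every x ∈ [0,1], −q(1−x²)^{3/2}/(2(1−qx²)^{1/2}) ≤ S(x) − √((1−x²)(1−qx²)) ≤ ((2−q)/3)·(1−x²)^{3/2}. -/
open Real Set MeasureTheory

open intervalIntegral

/-!
Put `G(t) = √((1 - t²)(1 - q t²))`. As `G(1) = 0`, `S(x) - G(x) = ∫ₓ¹ (s + G')` with `s` the
integrand of `S`, and the `(1 - t)^(-1/2)` singularities of `s` and `G'` cancel, leaving the
continuous integrand `√((1 - t)/(1 + t)) √(1 - q t²) - q t √(1 - t²)/√(1 - q t²)`.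

Since `(1 - t²)/(1 - q t²)` decreases, the integrand is at least `-q t √((1 - x²)/(1 - q x²))`
on `[x, 1]`, which integrates to the lower bound. Dropping the factors `√(1 - q t²) ≤ 1` bounds it
above by `√((1 - t)/(1 + t)) - q t √(1 - t²)`, whose integral over `[x, 1]` is
`arccos x - √(1 - x²) - (q/3)(1 - x²)^(3/2)`. The upper bound thus reduces to
`arccos x - √(1 - x²) ≤ (2/3)(1 - x²)^(3/2)`: the difference of the two sides increases and then
decreases on `[0, 1]`, and it is `5/3 - π/2 > 0` at `0` and `0` at `1`.
-/

lemma min_le_of_hasDerivAt_of_nonneg_of_nonpos {f f' : ℝ → ℝ} {a b c x : ℝ}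
    (hf : ContinuousOn f (Icc a b)) (hderiv : ∀ y ∈ Ioo a b, HasDerivAt f (f' y) y)
    (hinc : ∀ y ∈ Ioo a c, 0 ≤ f' y) (hdec : ∀ y ∈ Ioo c b, f' y ≤ 0)
    (hc : c ∈ Icc a b) (hx : x ∈ Icc a b) : min (f a) (f b) ≤ f x := by
  rcases le_total x c with hxc | hcx
  · have hmono : MonotoneOn f (Icc a c) := by
      refine monotoneOn_of_hasDerivWithinAt_nonneg (f' := f') (convex_Icc a c)
        (hf.mono (Icc_subset_Icc_right hc.2)) (fun y hy => ?_) (fun y hy => ?_)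
      all_goals rw [interior_Icc] at hy
      · exact (hderiv y ⟨hy.1, hy.2.trans_le hc.2⟩).hasDerivWithinAt
      · exact hinc y hy
    exact (min_le_left _ _).trans (hmono ⟨le_rfl, hc.1⟩ ⟨hx.1, hxc⟩ hx.1)
  · have hanti : AntitoneOn f (Icc c b) := by
      refine antitoneOn_of_hasDerivWithinAt_nonpos (f' := f') (convex_Icc c b)
        (hf.mono (Icc_subset_Icc_left hc.1)) (fun y hy => ?_) (fun y hy => ?_)
      all_goals rw [interior_Icc] at hy
      · exact (hderiv y ⟨hc.1.trans_lt hy.1, hy.2⟩).hasDerivWithinAt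
      · exact hdec y hy
    exact (min_le_right _ _).trans (hanti ⟨hcx, hx.2⟩ ⟨hc.2, le_rfl⟩ hx.2)

lemma intervalIntegrable_of_continuousOn_Ioc {f : ℝ → ℝ} {a b x : ℝ}
    (hf : ContinuousOn f (Ioc a b)) (hx : x ∈ Ioc a b) : IntervalIntegrable f volume x b :=
  (hf.mono (Icc_subset_Ioc_iff hx.2 |>.2 ⟨hx.1, le_rfl⟩)).intervalIntegrable_of_Icc hx.2

lemma one_sub_mul_sq_pos {q t : ℝ} (hq : q < 1) (ht : t ^ 2 ≤ 1) : 0 < 1 - q * t ^ 2 := by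
  rcases le_total 0 q with hq0 | hq0
  · nlinarith
  · nlinarith [sq_nonneg t]

lemma sqrt_one_sub_div_one_add {t : ℝ} (ht : t ∈ Ioc (-1 : ℝ) 1) :
    √((1 - t) / (1 + t)) = (1 - t) / √(1 - t ^ 2) := by
  rcases (sub_nonneg.2 ht.2).eq_or_lt with h | h
  · simp [← h]
  rw [Real.sqrt_div h.le, show 1 - t ^ 2 = (1 - t) * (1 + t) by ring, Real.sqrt_mul h.le,
    ← mul_div_mul_left (√(1 - t)) _ (Real.sqrt_pos.2 h).ne', Real.mul_self_sqrt h.le]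

lemma rpow_three_halves {a : ℝ} (ha : 0 ≤ a) : a ^ ((3 : ℝ) / 2) = a * √a := by
  rw [Real.sqrt_eq_rpow, show (3 : ℝ) / 2 = 1 + 1 / 2 by norm_num,
    Real.rpow_add' ha (by norm_num), Real.rpow_one]

noncomputable def remainderIntegrand (q t : ℝ) : ℝ :=
  √((1 - t) / (1 + t)) * √(1 - q * t ^ 2) - q * t * (√(1 - t ^ 2) / √(1 - q * t ^ 2))

noncomputable def negDerivSqrtProd (q t : ℝ) : ℝ :=
  t * (√(1 - q * t ^ 2) / √(1 - t ^ 2)) + q * t * (√(1 - t ^ 2) / √(1 - q * t ^ 2))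

noncomputable def remainderMajorant (q t : ℝ) : ℝ := √((1 - t) / (1 + t)) - q * t * √(1 - t ^ 2)

noncomputable def majorantPrimitive (q t : ℝ) : ℝ :=
  √(1 - t ^ 2) + q / 3 * ((1 - t ^ 2) * √(1 - t ^ 2)) - arccos t

section
variable {q x t : ℝ}

lemma hasDerivAt_neg_sqrt_prod (hq : q < 1) (ht : t ∈ Ioo (-1 : ℝ) 1) :
    HasDerivAt (fun t => -√((1 - t ^ 2) * (1 - q * t ^ 2))) (negDerivSqrtProd q t) t := by
  have hr : 0 < 1 - t ^ 2 := by nlinarith [ht.1, ht.2]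
  have hc : 0 < 1 - q * t ^ 2 := one_sub_mul_sq_pos hq (by nlinarith [ht.1, ht.2])
  have h := ((((hasDerivAt_pow 2 t).const_sub 1).mul
    (((hasDerivAt_pow 2 t).const_mul q).const_sub 1)).sqrt (mul_pos hr hc).ne').fun_neg
  refine h.congr_deriv ?_
  simp only [Pi.mul_apply]
  rw [negDerivSqrtProd, Real.sqrt_mul hr.le]
  have : 0 < √(1 - t ^ 2) := Real.sqrt_pos.2 hr
  have : 0 < √(1 - q * t ^ 2) := Real.sqrt_pos.2 hc
  field_simp
  rw [Real.sq_sqrt hr.le, Real.sq_sqrt hc.le]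
  push_cast
  ring

lemma negDerivSqrtProd_nonneg (hq : 0 ≤ q) (ht : 0 ≤ t) : 0 ≤ negDerivSqrtProd q t := by
  unfold negDerivSqrtProd
  positivity

lemma continuousOn_remainderIntegrand (hq : q < 1) :
    ContinuousOn (remainderIntegrand q) (Ioc (-1) 1) := by
  have h1 : ∀ t ∈ Ioc (-1 : ℝ) 1, 1 + t ≠ 0 := fun t ht => by linarith [ht.1]
  have h2 : ∀ t ∈ Ioc (-1 : ℝ) 1, √(1 - q * t ^ 2) ≠ 0 := fun t ht =>
    (Real.sqrt_pos.2 (one_sub_mul_sq_pos hq (by nlinarith [ht.1, ht.2]))).ne'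
  unfold remainderIntegrand
  fun_prop (disch := assumption)

-- At `t = 1` both sides are `0`, as `√(1 - t ^ 2) = 0` is then a denominator.
lemma sqrt_div_eq_remainderIntegrand_add (hq : q < 1) (ht : t ∈ Ioc (-1 : ℝ) 1) :
    √((1 - q * t ^ 2) / (1 - t ^ 2)) = remainderIntegrand q t + negDerivSqrtProd q t := by
  have hc : 0 < 1 - q * t ^ 2 := one_sub_mul_sq_pos hq (by nlinarith [ht.1, ht.2])
  rw [remainderIntegrand, negDerivSqrtProd, sqrt_one_sub_div_one_add ht, Real.sqrt_div hc.le]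
  ring

section
variable (hq0 : 0 ≤ q) (hq1 : q < 1) (hx0 : 0 ≤ x) (hx1 : x ≤ 1)
include hq0 hq1 hx0 hx1

lemma intervalIntegrable_negDerivSqrtProd : IntervalIntegrable (negDerivSqrtProd q) volume x 1 :=
  (intervalIntegrable_iff_integrableOn_Ioc_of_le hx1).2 <|
    integrableOn_deriv_of_nonneg (g := fun t => -√((1 - t ^ 2) * (1 - q * t ^ 2)))
      (by fun_prop) (fun t ht => hasDerivAt_neg_sqrt_prod hq1 ⟨by linarith [ht.1], ht.2⟩)
      (fun t ht => negDerivSqrtProd_nonneg hq0 (hx0.trans ht.1.le))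

lemma integral_negDerivSqrtProd :
    ∫ t in x..1, negDerivSqrtProd q t = √((1 - x ^ 2) * (1 - q * x ^ 2)) := by
  rw [integral_eq_sub_of_hasDerivAt_of_le hx1 (by fun_prop)
    (fun t ht => hasDerivAt_neg_sqrt_prod hq1 ⟨by linarith [ht.1], ht.2⟩)
    (intervalIntegrable_negDerivSqrtProd hq0 hq1 hx0 hx1)]
  simp

lemma Sfun_sub_sqrt_eq_integral :
    Sfun q x - √((1 - x ^ 2) * (1 - q * x ^ 2)) = ∫ t in x..1, remainderIntegrand q t := by
  have hrem := intervalIntegrable_of_continuousOn_Ioc (continuousOn_remainderIntegrand hq1)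
    ⟨by linarith, hx1⟩
  rw [Sfun, ← integral_negDerivSqrtProd hq0 hq1 hx0 hx1, sub_eq_iff_eq_add,
    ← integral_add hrem (intervalIntegrable_negDerivSqrtProd hq0 hq1 hx0 hx1)]
  refine integral_congr fun t ht => ?_
  rw [uIcc_of_le hx1] at ht
  exact sqrt_div_eq_remainderIntegrand_add hq1 ⟨by linarith [ht.1], ht.2⟩

end

lemma neg_mul_le_remainderIntegrand (hq0 : 0 ≤ q) (hq1 : q < 1) (hx0 : 0 ≤ x)
    (ht : t ∈ Icc x 1) :
    -(q * √((1 - x ^ 2) / (1 - q * x ^ 2))) * t ≤ remainderIntegrand q t := by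
  have ht0 : 0 ≤ t := hx0.trans ht.1
  have hct : 0 < 1 - q * t ^ 2 := one_sub_mul_sq_pos hq1 (by nlinarith [ht.2])
  have hcx : 0 < 1 - q * x ^ 2 := one_sub_mul_sq_pos hq1 (by nlinarith [ht.1, ht.2])
  have hdecr : (1 - t ^ 2) / (1 - q * t ^ 2) ≤ (1 - x ^ 2) / (1 - q * x ^ 2) := by
    rw [div_le_div_iff₀ hct hcx]
    nlinarith [mul_nonneg (mul_nonneg (sub_nonneg.2 ht.1) (add_nonneg ht0 hx0))
      (sub_nonneg.2 hq1.le)]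
  have hfirst : 0 ≤ √((1 - t) / (1 + t)) * √(1 - q * t ^ 2) := by positivity
  have hsecond : q * t * (√(1 - t ^ 2) / √(1 - q * t ^ 2)) ≤
      q * √((1 - x ^ 2) / (1 - q * x ^ 2)) * t := by
    rw [← Real.sqrt_div' _ hct.le, mul_right_comm]
    exact mul_le_mul_of_nonneg_right
      (mul_le_mul_of_nonneg_left (Real.sqrt_le_sqrt hdecr) hq0) ht0
  rw [remainderIntegrand]
  linarith

lemma remainderIntegrand_le_remainderMajorant (hq0 : 0 ≤ q) (hq1 : q < 1) (ht : t ∈ Icc 0 1) :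
    remainderIntegrand q t ≤ remainderMajorant q t := by
  have hct : 0 < 1 - q * t ^ 2 := one_sub_mul_sq_pos hq1 (by nlinarith [ht.1, ht.2])
  have hc1 : √(1 - q * t ^ 2) ≤ 1 :=
    Real.sqrt_le_one.2 (by nlinarith [mul_nonneg hq0 (sq_nonneg t)])
  have hfirst : √((1 - t) / (1 + t)) * √(1 - q * t ^ 2) ≤ √((1 - t) / (1 + t)) :=
    mul_le_of_le_one_right (Real.sqrt_nonneg _) hc1
  have hsecond : √(1 - t ^ 2) ≤ √(1 - t ^ 2) / √(1 - q * t ^ 2) :=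
    le_div_self (Real.sqrt_nonneg _) (Real.sqrt_pos.2 hct) hc1
  rw [remainderIntegrand, remainderMajorant]
  nlinarith [mul_le_mul_of_nonneg_left hsecond (mul_nonneg hq0 ht.1)]

lemma hasDerivAt_majorantPrimitive (q : ℝ) (ht : t ∈ Ioo (-1 : ℝ) 1) :
    HasDerivAt (majorantPrimitive q) (remainderMajorant q t) t := by
  have hr : 0 < 1 - t ^ 2 := by nlinarith [ht.1, ht.2]
  have hsq := ((hasDerivAt_pow 2 t).const_sub 1).sqrt hr.ne'
  have h := (hsq.add (((hasDerivAt_pow 2 t).const_sub 1).mul hsq |>.const_mul (q / 3))).sub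
    (hasDerivAt_arccos ht.1.ne' ht.2.ne)
  refine h.congr_deriv ?_
  rw [remainderMajorant, sqrt_one_sub_div_one_add ⟨ht.1, ht.2.le⟩]
  have : 0 < √(1 - t ^ 2) := Real.sqrt_pos.2 hr
  field_simp
  rw [Real.sq_sqrt hr.le]
  push_cast
  ring

lemma continuousOn_remainderMajorant (q : ℝ) :
    ContinuousOn (remainderMajorant q) (Ioc (-1) 1) := by
  have h1 : ∀ t ∈ Ioc (-1 : ℝ) 1, 1 + t ≠ 0 := fun t ht => by linarith [ht.1]
  unfold remainderMajorant
  fun_prop (disch := assumption)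

lemma integral_remainderMajorant (hx : x ∈ Ioc (-1 : ℝ) 1) :
    ∫ t in x..1, remainderMajorant q t = -majorantPrimitive q x := by
  have hcont : ContinuousOn (majorantPrimitive q) (Icc x 1) := by
    unfold majorantPrimitive
    fun_prop
  rw [integral_eq_sub_of_hasDerivAt_of_le hx.2 hcont
    (fun t ht => hasDerivAt_majorantPrimitive q ⟨hx.1.trans ht.1, ht.2⟩)
    (intervalIntegrable_of_continuousOn_Ioc (continuousOn_remainderMajorant q) hx)]
  simp [majorantPrimitive]

lemma remainderMajorant_two_eq {x₀ : ℝ} (hx₀ : 2 * x₀ ^ 2 + 2 * x₀ = 1)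
    (ht : t ∈ Ioo (-1 : ℝ) 1) :
    remainderMajorant 2 t = 2 * (1 - t) * (x₀ - t) * (x₀ + 1 + t) / √(1 - t ^ 2) := by
  have hr : 0 < 1 - t ^ 2 := by nlinarith [ht.1, ht.2]
  have : 0 < √(1 - t ^ 2) := Real.sqrt_pos.2 hr
  rw [remainderMajorant, sqrt_one_sub_div_one_add ⟨ht.1, ht.2.le⟩]
  field_simp
  rw [Real.sq_sqrt hr.le]
  linear_combination (t - 1) * hx₀

lemma majorantPrimitive_two_nonneg (hx : x ∈ Icc (0 : ℝ) 1) : 0 ≤ majorantPrimitive 2 x := by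
  have hsq3 : √3 ^ 2 = 3 := Real.sq_sqrt (by norm_num)
  have hone_le : 1 ≤ √3 := Real.one_le_sqrt.2 (by norm_num)
  set x₀ := (√3 - 1) / 2 with hx₀def
  have hx₀ : 2 * x₀ ^ 2 + 2 * x₀ = 1 := by linear_combination hsq3 / 2
  have hx₀0 : 0 ≤ x₀ := by linarith
  have hx₀1 : x₀ ≤ 1 := by nlinarith
  have hmin := min_le_of_hasDerivAt_of_nonneg_of_nonpos (f := majorantPrimitive 2) (c := x₀)
    (by unfold majorantPrimitive; fun_prop)
    (fun t ht => hasDerivAt_majorantPrimitive 2 ⟨by linarith [ht.1], ht.2⟩)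
    (fun t ht => by
      rw [remainderMajorant_two_eq hx₀ ⟨by linarith [ht.1], by linarith [ht.2]⟩]
      have : 0 ≤ 1 - t := by linarith [ht.2]
      have : 0 ≤ x₀ - t := by linarith [ht.2]
      have : 0 ≤ x₀ + 1 + t := by linarith [ht.1]
      positivity)
    (fun t ht => by
      rw [remainderMajorant_two_eq hx₀ ⟨by linarith [ht.1], ht.2⟩]
      refine div_nonpos_of_nonpos_of_nonneg ?_ (Real.sqrt_nonneg _)
      have h1 : 0 ≤ 1 - t := by linarith [ht.2]
      have h2 : 0 ≤ t - x₀ := by linarith [ht.1]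
      have h3 : 0 ≤ x₀ + 1 + t := by linarith [ht.1]
      nlinarith [mul_nonneg (mul_nonneg h1 h2) h3])
    ⟨hx₀0, hx₀1⟩ hx
  have h0 : majorantPrimitive 2 0 = 5 / 3 - π / 2 := by norm_num [majorantPrimitive]
  have h1 : majorantPrimitive 2 1 = 0 := by simp [majorantPrimitive]
  rw [h0, h1] at hmin
  have := Real.pi_lt_d2
  exact le_trans (le_min (by linarith) le_rfl) hmin

end

/-- Two-sided bound for `S(x) − √((1−x²)(1−qx²))` on `[0,1]`. -/
theorem statement4 (q : ℝ) (hq0 : 0 ≤ q) (hq1 : q < 1)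
    (x : ℝ) (hx : x ∈ Set.Icc (0:ℝ) 1) :
    -(q * (1 - x^2) ^ ((3:ℝ)/2) / (2 * Real.sqrt (1 - q * x^2)))
        ≤ Sfun q x - Real.sqrt ((1 - x^2) * (1 - q * x^2)) ∧
      Sfun q x - Real.sqrt ((1 - x^2) * (1 - q * x^2))
        ≤ (2 - q) / 3 * (1 - x^2) ^ ((3:ℝ)/2) := by
  obtain ⟨hx0, hx1⟩ := hx
  have hx' : x ∈ Ioc (-1 : ℝ) 1 := ⟨by linarith, hx1⟩
  have hr : 0 ≤ 1 - x ^ 2 := by nlinarith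
  have hc : 0 < √(1 - q * x ^ 2) := Real.sqrt_pos.2 (one_sub_mul_sq_pos hq1 (by nlinarith))
  have hrem := intervalIntegrable_of_continuousOn_Ioc (continuousOn_remainderIntegrand hq1) hx'
  rw [rpow_three_halves hr, Sfun_sub_sqrt_eq_integral hq0 hq1 hx0 hx1]
  constructor
  · calc -(q * ((1 - x ^ 2) * √(1 - x ^ 2)) / (2 * √(1 - q * x ^ 2)))
        = ∫ t in x..1, -(q * √((1 - x ^ 2) / (1 - q * x ^ 2))) * t := by
          rw [intervalIntegral.integral_const_mul, integral_id, Real.sqrt_div hr]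
          field_simp
      _ ≤ ∫ t in x..1, remainderIntegrand q t :=
          integral_mono_on hx1 ((by fun_prop : Continuous _).intervalIntegrable _ _) hrem
            fun t ht => neg_mul_le_remainderIntegrand hq0 hq1 hx0 ht
  · calc ∫ t in x..1, remainderIntegrand q t ≤ ∫ t in x..1, remainderMajorant q t :=
          integral_mono_on hx1 hrem
            (intervalIntegrable_of_continuousOn_Ioc (continuousOn_remainderMajorant q) hx')
            fun t ht => remainderIntegrand_le_remainderMajorant hq0 hq1 ⟨hx0.trans ht.1, ht.2⟩
      _ = -majorantPrimitive q x := integral_remainderMajorant hx'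
      _ ≤ (2 - q) / 3 * ((1 - x ^ 2) * √(1 - x ^ 2)) := by
          have := majorantPrimitive_two_nonneg ⟨hx0, hx1⟩
          unfold majorantPrimitive at *
          linear_combination this
end

section
/- Let 0 ≤ q < 1. Then for every x ∈ [0,1), |1/(4S(x)²) − T_q(x)| ≤ (3+2q)/(4(1−qx²)²). -/
/-!
Write `u = arccos x`, `s = sin u = √(1 - x²)`, `y = 1 - x²` and `m = 1 - q x²`. On `[x, 1]` we have
`1 - q t² ≤ m`, so the integrand of `S` lies between `(1 - q t²) / (√m √(1 - t²))` and
`√m / √(1 - t²)`, both of which have elementary primitives; this gives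
`(1 - q/2) u - (q/2) x s ≤ S √m` and `S ≤ √m u`. The elementary bounds `s + s³/6 ≤ u ≤ s + s³` and
`(2/3) s³ ≤ u - s x` turn these into polynomial bounds on `S²` in terms of `y`, and the claimed
estimate then reduces to two polynomial inequalities in `(q, y) ∈ [0, 1]²`, each checked through an
explicit nonnegative certificate.
-/

open Real Set MeasureTheory

namespace Real

lemma hasDerivAt_sin_pow_three (v : ℝ) :
    HasDerivAt (fun w => sin w ^ 3) (3 * sin v ^ 2 * cos v) v := by
  simpa using (hasDerivAt_sin v).fun_pow 3

lemma sin_add_sin_pow_three_div_six_le {u : ℝ} (hu : 0 ≤ u) : sin u + sin u ^ 3 / 6 ≤ u := by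
  have hderiv (v : ℝ) : HasDerivAt (fun w => w - sin w - sin w ^ 3 / 6)
      (1 - cos v - 3 * sin v ^ 2 * cos v / 6) v :=
    ((hasDerivAt_id v).sub (hasDerivAt_sin v)).sub ((hasDerivAt_sin_pow_three v).div_const 6)
  -- the derivative is `(1 - cos v)² (2 + cos v) / 2`
  have hmono := monotone_of_hasDerivAt_nonneg hderiv fun v => show (0 : ℝ) ≤ _ by
    nlinarith [sin_sq_add_cos_sq v, neg_one_le_cos v, mul_nonneg (sq_nonneg (cos v - 1))
      (by linarith [neg_one_le_cos v] : (0 : ℝ) ≤ cos v + 2)]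
  have := hmono hu
  simp only [sin_zero] at this
  linarith

lemma two_div_three_mul_sin_pow_three_le {u : ℝ} (hu : 0 ≤ u) :
    2 / 3 * sin u ^ 3 ≤ u - sin u * cos u := by
  have hderiv (v : ℝ) : HasDerivAt (fun w => w - sin w * cos w - 2 / 3 * sin w ^ 3)
      (1 - (cos v * cos v + sin v * -sin v) - 2 / 3 * (3 * sin v ^ 2 * cos v)) v :=
    ((hasDerivAt_id v).sub ((hasDerivAt_sin v).mul (hasDerivAt_cos v))).sub
      ((hasDerivAt_sin_pow_three v).const_mul _)
  -- the derivative is `2 sin² v (1 - cos v)`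
  have hmono := monotone_of_hasDerivAt_nonneg hderiv fun v => show (0 : ℝ) ≤ _ by
    nlinarith [sin_sq_add_cos_sq v, mul_nonneg (sq_nonneg (sin v)) (sub_nonneg.2 (cos_le_one v))]
  have := hmono hu
  simp only [sin_zero, cos_zero] at this
  linarith

lemma le_sin_add_sin_pow_three {u : ℝ} (hu0 : 0 ≤ u) (hu : u ≤ π / 2) :
    u ≤ sin u + sin u ^ 3 := by
  rcases le_or_gt (sin u) (9 / 10) with hsin | hsin
  · -- the derivative `(1 - c)(3c² + 3c - 1)`, `c = cos v`, is nonnegative while `sin v ≤ 9/10`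
    have hderiv (v : ℝ) : HasDerivAt (fun w => sin w + sin w ^ 3 - w)
        (cos v + 3 * sin v ^ 2 * cos v - 1) v :=
      ((hasDerivAt_sin v).add (hasDerivAt_sin_pow_three v)).sub (hasDerivAt_id v)
    have hmono : MonotoneOn (fun w => sin w + sin w ^ 3 - w) (Icc 0 u) := by
      refine monotoneOn_of_hasDerivWithinAt_nonneg (convex_Icc 0 u)
        (fun v _ => (hderiv v).continuousAt.continuousWithinAt)
        (fun v _ => (hderiv v).hasDerivWithinAt) fun v hv => ?_
      rw [interior_Icc] at hv
      have hcos : 0 ≤ cos v :=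
        cos_nonneg_of_mem_Icc ⟨by linarith [pi_pos, hv.1], by linarith [hv.2]⟩
      have hsin_v : sin v ≤ 9 / 10 :=
        (sin_le_sin_of_le_of_le_pi_div_two (by linarith [pi_pos, hv.1]) hu hv.2.le).trans hsin
      have hcos_sq : 19 / 100 ≤ cos v ^ 2 := by
        nlinarith [sin_sq_add_cos_sq v, sin_nonneg_of_nonneg_of_le_pi hv.1.le (by linarith [hv.2])]
      nlinarith [sin_sq_add_cos_sq v, cos_le_one v, sq_nonneg (cos v - 1)]
    have := hmono ⟨le_rfl, hu0⟩ ⟨hu0, le_rfl⟩ hu0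
    simp only [sin_zero] at this
    linarith
  · nlinarith [pi_lt_d2, pow_le_pow_left₀ (by norm_num) hsin.le 3]

end Real

section ArccosIntegral

variable {q x : ℝ}

lemma one_sub_mul_sq_nonneg (hq : q ≤ 1) (hx : x ^ 2 ≤ 1) : 0 ≤ 1 - q * x ^ 2 := by
  nlinarith [mul_nonneg (sub_nonneg.2 hq) (sq_nonneg x)]

lemma hasDerivAt_primitive_one_sub_mul_sq_div_sqrt {t : ℝ} (ht : t ∈ Ioo (-1 : ℝ) 1) :
    HasDerivAt (fun t => -(1 - q / 2) * arccos t + q / 2 * (t * √(1 - t ^ 2)))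
      ((1 - q * t ^ 2) / √(1 - t ^ 2)) t := by
  have hpos : 0 < 1 - t ^ 2 := by nlinarith [ht.1, ht.2]
  have hsqrt : HasDerivAt (fun t => √(1 - t ^ 2)) (-(2 * t) / (2 * √(1 - t ^ 2))) t := by
    simpa using ((hasDerivAt_pow 2 t).const_sub 1).sqrt hpos.ne'
  have h := ((hasDerivAt_arccos (by linarith [ht.1]) ht.2.ne).const_mul (-(1 - q / 2))).add
    (((hasDerivAt_id t).mul hsqrt).const_mul (q / 2))
  refine h.congr_deriv ?_
  have hs : √(1 - t ^ 2) ^ 2 = 1 - t ^ 2 := sq_sqrt hpos.le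
  simp only [id]
  field_simp
  linear_combination q * hs

lemma intervalIntegrable_one_sub_mul_sq_div_sqrt (hq : q ≤ 1) (hx : x ∈ Icc (-1 : ℝ) 1) :
    IntervalIntegrable (fun t => (1 - q * t ^ 2) / √(1 - t ^ 2)) volume x 1 := by
  refine intervalIntegral.intervalIntegrable_deriv_of_nonneg (by fun_prop)
    (fun t ht => hasDerivAt_primitive_one_sub_mul_sq_div_sqrt ?_) fun t ht => ?_
  all_goals rw [min_eq_left hx.2, max_eq_right hx.2] at ht
  · exact ⟨hx.1.trans_lt ht.1, ht.2⟩
  · have : t ^ 2 ≤ 1 := by nlinarith [hx.1.trans_lt ht.1, ht.2]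
    exact div_nonneg (one_sub_mul_sq_nonneg hq this) (sqrt_nonneg _)

lemma integral_one_sub_mul_sq_div_sqrt (hq : q ≤ 1) (hx : x ∈ Icc (-1 : ℝ) 1) :
    ∫ t in x..1, (1 - q * t ^ 2) / √(1 - t ^ 2) =
      (1 - q / 2) * arccos x - q / 2 * (x * √(1 - x ^ 2)) := by
  rw [intervalIntegral.integral_eq_sub_of_hasDerivAt_of_le hx.2 (by fun_prop)
    (fun t ht => hasDerivAt_primitive_one_sub_mul_sq_div_sqrt ⟨hx.1.trans_lt ht.1, ht.2⟩)
    (intervalIntegrable_one_sub_mul_sq_div_sqrt hq hx)]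
  simp only [arccos_one, one_pow, sub_self, sqrt_zero, mul_zero, add_zero, zero_sub]
  ring

end ArccosIntegral

section SfunBounds

variable {q x : ℝ}

lemma one_sub_mul_sq_le_of_le (hq : 0 ≤ q) (hx : 0 ≤ x) {t : ℝ} (hxt : x ≤ t) :
    1 - q * t ^ 2 ≤ 1 - q * x ^ 2 := by
  nlinarith [mul_le_mul_of_nonneg_left (pow_le_pow_left₀ hx hxt 2) hq]

lemma sqrt_Sfun_integrand_le {t : ℝ} (hq : 0 ≤ q) (hx : 0 ≤ x) (ht : t ∈ Icc x 1) :
    √((1 - q * t ^ 2) / (1 - t ^ 2)) ≤ √(1 - q * x ^ 2) * (1 / √(1 - t ^ 2)) := by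
  rw [sqrt_div' _ (by nlinarith [ht.1, ht.2]), mul_one_div]
  exact div_le_div_of_nonneg_right (sqrt_le_sqrt (one_sub_mul_sq_le_of_le hq hx ht.1))
    (sqrt_nonneg _)

lemma le_sqrt_Sfun_integrand_mul {t : ℝ} (hq0 : 0 ≤ q) (hq1 : q ≤ 1) (hx : 0 ≤ x)
    (ht : t ∈ Icc x 1) :
    (1 - q * t ^ 2) / √(1 - t ^ 2) ≤ √((1 - q * t ^ 2) / (1 - t ^ 2)) * √(1 - q * x ^ 2) := by
  have ht2 : t ^ 2 ≤ 1 := by nlinarith [ht.1, ht.2]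
  have hpos := one_sub_mul_sq_nonneg hq1 ht2
  rw [sqrt_div' _ (by linarith), div_mul_eq_mul_div]
  refine div_le_div_of_nonneg_right ?_ (sqrt_nonneg _)
  calc 1 - q * t ^ 2 = √(1 - q * t ^ 2) * √(1 - q * t ^ 2) := (mul_self_sqrt hpos).symm
    _ ≤ √(1 - q * t ^ 2) * √(1 - q * x ^ 2) :=
      mul_le_mul_of_nonneg_left (sqrt_le_sqrt (one_sub_mul_sq_le_of_le hq0 hx ht.1)) (sqrt_nonneg _)

lemma integral_one_div_sqrt_one_sub_sq (hx : x ∈ Icc (-1 : ℝ) 1) :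
    ∫ t in x..1, 1 / √(1 - t ^ 2) = arccos x := by
  simpa using integral_one_sub_mul_sq_div_sqrt (q := 0) zero_le_one hx

lemma intervalIntegrable_one_div_sqrt_one_sub_sq (hx : x ∈ Icc (-1 : ℝ) 1) :
    IntervalIntegrable (fun t => 1 / √(1 - t ^ 2)) volume x 1 := by
  simpa using intervalIntegrable_one_sub_mul_sq_div_sqrt (q := 0) zero_le_one hx

lemma intervalIntegrable_Sfun_integrand (hq : 0 ≤ q) (hx : x ∈ Icc (0 : ℝ) 1) :
    IntervalIntegrable (fun t => √((1 - q * t ^ 2) / (1 - t ^ 2))) volume x 1 := by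
  refine ((intervalIntegrable_one_div_sqrt_one_sub_sq ⟨by linarith [hx.1], hx.2⟩).const_mul
    √(1 - q * x ^ 2)).mono_fun' (Measurable.aestronglyMeasurable (by fun_prop)) ?_
  rw [Filter.EventuallyLE, ae_restrict_iff' measurableSet_uIoc]
  refine Filter.Eventually.of_forall fun t ht => ?_
  rw [uIoc_of_le hx.2] at ht
  rw [norm_of_nonneg (sqrt_nonneg _)]
  exact sqrt_Sfun_integrand_le hq hx.1 ⟨ht.1.le, ht.2⟩

lemma Sfun_le_sqrt_mul_arccos (hq : 0 ≤ q) (hx : x ∈ Icc (0 : ℝ) 1) :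
    Sfun q x ≤ √(1 - q * x ^ 2) * arccos x := by
  have hx' : x ∈ Icc (-1 : ℝ) 1 := ⟨by linarith [hx.1], hx.2⟩
  calc Sfun q x ≤ ∫ t in x..1, √(1 - q * x ^ 2) * (1 / √(1 - t ^ 2)) :=
        intervalIntegral.integral_mono_on hx.2 (intervalIntegrable_Sfun_integrand hq hx)
          ((intervalIntegrable_one_div_sqrt_one_sub_sq hx').const_mul _)
          fun t ht => sqrt_Sfun_integrand_le hq hx.1 ht
    _ = √(1 - q * x ^ 2) * arccos x := by
        rw [intervalIntegral.integral_const_mul, integral_one_div_sqrt_one_sub_sq hx']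

lemma le_Sfun_mul_sqrt (hq0 : 0 ≤ q) (hq1 : q ≤ 1) (hx : x ∈ Icc (0 : ℝ) 1) :
    (1 - q / 2) * arccos x - q / 2 * (x * √(1 - x ^ 2)) ≤ Sfun q x * √(1 - q * x ^ 2) := by
  have hx' : x ∈ Icc (-1 : ℝ) 1 := ⟨by linarith [hx.1], hx.2⟩
  rw [← integral_one_sub_mul_sq_div_sqrt hq1 hx', Sfun, ← intervalIntegral.integral_mul_const]
  exact intervalIntegral.integral_mono_on hx.2 (intervalIntegrable_one_sub_mul_sq_div_sqrt hq1 hx')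
    ((intervalIntegrable_Sfun_integrand hq0 hx).mul_const _)
    fun t ht => le_sqrt_Sfun_integrand_mul hq0 hq1 hx.1 ht

lemma Sfun_nonneg (hx : x ≤ 1) : 0 ≤ Sfun q x :=
  intervalIntegral.integral_nonneg hx fun _ _ => sqrt_nonneg _

lemma sq_Sfun_bounds (hq0 : 0 ≤ q) (hq1 : q ≤ 1) (hx : x ∈ Icc (0 : ℝ) 1) :
    (1 - x ^ 2) * ((1 - q) * (1 + (1 - x ^ 2) / 6) + q / 3 * (1 - x ^ 2)) ^ 2 ≤
        (1 - q * x ^ 2) * Sfun q x ^ 2 ∧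
      Sfun q x ^ 2 ≤ (1 - q * x ^ 2) * (1 - x ^ 2) * (1 + (1 - x ^ 2)) ^ 2 := by
  have hu0 : 0 ≤ arccos x := arccos_nonneg x
  have hsin : sin (arccos x) = √(1 - x ^ 2) := sin_arccos x
  have hcos : cos (arccos x) = x := cos_arccos (by linarith [hx.1]) hx.2
  have hs2 : √(1 - x ^ 2) ^ 2 = 1 - x ^ 2 := sq_sqrt (by nlinarith [hx.1, hx.2])
  set s := √(1 - x ^ 2)
  have hs0 : 0 ≤ s := sqrt_nonneg _
  have hm2 : √(1 - q * x ^ 2) ^ 2 = 1 - q * x ^ 2 :=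
    sq_sqrt (one_sub_mul_sq_nonneg hq1 (by nlinarith [hx.1, hx.2]))
  constructor
  · have h1 := sin_add_sin_pow_three_div_six_le hu0
    have h2 := two_div_three_mul_sin_pow_three_le hu0
    rw [hsin] at h1 h2
    rw [hcos] at h2
    have hsE : s * ((1 - q) * (1 + (1 - x ^ 2) / 6) + q / 3 * (1 - x ^ 2)) =
        (1 - q) * (s + s ^ 3 / 6) + q / 2 * (2 / 3 * s ^ 3) := by
      rw [← hs2]; ring
    have hE : 0 ≤ s * ((1 - q) * (1 + (1 - x ^ 2) / 6) + q / 3 * (1 - x ^ 2)) := by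
      rw [hsE]; have := sub_nonneg.2 hq1; positivity
    have hlow : s * ((1 - q) * (1 + (1 - x ^ 2) / 6) + q / 3 * (1 - x ^ 2)) ≤
        Sfun q x * √(1 - q * x ^ 2) := by
      refine le_trans ?_ (le_Sfun_mul_sqrt hq0 hq1 hx)
      rw [hsE]
      nlinarith [mul_le_mul_of_nonneg_left h1 (sub_nonneg.2 hq1), mul_le_mul_of_nonneg_left h2 hq0]
    have := pow_le_pow_left₀ hE hlow 2
    rw [mul_pow, mul_pow, hs2, hm2] at this
    linarith
  · have hup := (Sfun_le_sqrt_mul_arccos hq0 hx).trans (mul_le_mul_of_nonneg_left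
      (le_sin_add_sin_pow_three hu0 (arccos_le_pi_div_two.2 hx.1)) (sqrt_nonneg _))
    have := pow_le_pow_left₀ (Sfun_nonneg hx.2) hup 2
    rw [hsin] at this
    calc Sfun q x ^ 2 ≤ _ := this
      _ = √(1 - q * x ^ 2) ^ 2 * s ^ 2 * (1 + s ^ 2) ^ 2 := by ring
      _ = _ := by rw [hs2, hm2]

end SfunBounds

section PolynomialInequalities

variable {q y : ℝ}

lemma lower_polynomial_inequality (hq0 : 0 ≤ q) (hq1 : q ≤ 1) (hy0 : 0 ≤ y) (hy1 : y ≤ 1) :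
    ((1 - q) ^ 2 - (1 - q) * (2 + 3 * q) * y + q * (3 - 4 * q) * y ^ 2) * (1 + y) ^ 2 ≤
      (1 - q + q * y) ^ 2 := by
  have h1 : 0 ≤ y * (2 * y + 2 * y ^ 2 + y ^ 3) := by positivity
  have h2 : 0 ≤ (1 - q) * (y * y * (1 - y) * (1 + y)) :=
    mul_nonneg (by linarith) (mul_nonneg (mul_nonneg (by positivity) (by linarith)) (by linarith))
  have h3 : 0 ≤ q * (1 - q) * (y * (1 - y) * (4 * y ^ 2 + 9 * y + 7)) :=
    mul_nonneg (mul_nonneg hq0 (by linarith))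
      (mul_nonneg (mul_nonneg hy0 (by linarith)) (by positivity))
  linear_combination h1 + h2 + h3

lemma upper_polynomial_inequality (hq0 : 0 ≤ q) (hq1 : q ≤ 1) (hy0 : 0 ≤ y) (hy1 : y ≤ 1) :
    (1 - q + q * y) ^ 4 ≤
      ((1 - q) * (1 + y / 6) + q / 3 * y) ^ 2 *
        ((1 - q) ^ 2 + (1 - q) * (4 + q) * y + 9 * q * y ^ 2) := by
  set p := 1 - q with hp
  have hp0 : 0 ≤ p := by linarith
  have hp1 : p ≤ 1 := by linarith
  -- a certificate in the basis `1 - p², p - p², p², p³` with coefficients nonnegative on `[0, 1]`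
  have hc0 : 0 ≤ 23 / 9 * y ^ 2 + 2 * y ^ 3 := by positivity
  have hc1 : 0 ≤ 58 / 9 * y + 7 / 3 * y ^ 2 - 19 / 4 * y ^ 3 := by nlinarith
  have hc2 : 0 ≤ 5 / 3 + 7 * y - 139 / 36 * y ^ 2 + y ^ 3 := by nlinarith
  have hc3 : 0 ≤ 8 / 3 - 203 / 36 * y + 143 / 36 * y ^ 2 - y ^ 3 := by
    have hquad : 0 ≤ y ^ 2 - 107 / 36 * y + 8 / 3 := by nlinarith [sq_nonneg (y - 107 / 72)]
    nlinarith [mul_nonneg (sub_nonneg.2 hy1) hquad]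
  have hcert : 0 ≤ p * y * ((23 / 9 * y ^ 2 + 2 * y ^ 3) * (1 - p ^ 2)
      + (58 / 9 * y + 7 / 3 * y ^ 2 - 19 / 4 * y ^ 3) * (p - p ^ 2)
      + (5 / 3 + 7 * y - 139 / 36 * y ^ 2 + y ^ 3) * p ^ 2
      + (8 / 3 - 203 / 36 * y + 143 / 36 * y ^ 2 - y ^ 3) * p ^ 3) := by
    have : 0 ≤ 1 - p ^ 2 := by nlinarith
    have : 0 ≤ p - p ^ 2 := by nlinarith
    positivity
  rw [hp] at hcert
  linear_combination hcert

end PolynomialInequalities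

lemma abs_one_div_four_mul_sub_le {q y m σ : ℝ} (hq0 : 0 ≤ q) (hq1 : q ≤ 1) (hy0 : 0 < y)
    (hy1 : y ≤ 1) (hm : m = 1 - q + q * y)
    (hlow : y * ((1 - q) * (1 + y / 6) + q / 3 * y) ^ 2 ≤ m * σ)
    (hup : σ ≤ m * y * (1 + y) ^ 2) :
    |1 / (4 * σ) -
        ((1 - q) ^ 2 / (4 * y * m ^ 3) + ((1 - q) ^ 2 + 2 * q * (3 - q) * y) / (4 * m ^ 3))| ≤
      (3 + 2 * q) / (4 * m ^ 2) := by
  have hm0 : 0 < m := by nlinarith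
  have hpoly_upper := upper_polynomial_inequality hq0 hq1 hy0.le hy1
  have hpoly_lower := lower_polynomial_inequality hq0 hq1 hy0.le hy1
  rw [← hm] at hpoly_upper hpoly_lower
  set E := (1 - q) * (1 + y / 6) + q / 3 * y with hE
  set N := (1 - q) ^ 2 - (1 - q) * (2 + 3 * q) * y + q * (3 - 4 * q) * y ^ 2
  set D := (1 - q) ^ 2 + (1 - q) * (4 + q) * y + 9 * q * y ^ 2
  have hD0 : 0 ≤ D := by
    have : 0 ≤ (1 - q) * (4 + q) * y := mul_nonneg (mul_nonneg (by linarith) (by linarith)) hy0.le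
    positivity
  have hσ : 0 < σ := by
    have hE0 : 0 < E := by nlinarith [mul_nonneg hq0 hy0.le]
    exact pos_of_mul_pos_right ((by positivity : 0 < y * E ^ 2).trans_le hlow) hm0.le
  have hupper : 1 / (4 * σ) ≤ D / (4 * y * m ^ 3) := by
    rw [div_le_div_iff₀ (by positivity) (by positivity)]
    have : m * (y * m ^ 3) ≤ m * (σ * D) :=
      calc m * (y * m ^ 3) = y * m ^ 4 := by ring
        _ ≤ y * (E ^ 2 * D) := mul_le_mul_of_nonneg_left hpoly_upper hy0.le
        _ = y * E ^ 2 * D := by ring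
        _ ≤ m * σ * D := mul_le_mul_of_nonneg_right hlow hD0
        _ = m * (σ * D) := by ring
    linarith [le_of_mul_le_mul_left this hm0]
  have hlower : N / (4 * y * m ^ 3) ≤ 1 / (4 * σ) := by
    rw [div_le_div_iff₀ (by positivity) (by positivity)]
    rcases le_or_gt N 0 with hN | hN
    · nlinarith [mul_nonneg hy0.le (pow_pos hm0 3).le]
    calc N * (4 * σ) ≤ 4 * (m * y * (N * (1 + y) ^ 2)) := by
          nlinarith [mul_le_mul_of_nonneg_left hup hN.le]
      _ ≤ 4 * (m * y * m ^ 2) := by gcongr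
      _ = 1 * (4 * y * m ^ 3) := by ring
  have hT_sub : (1 - q) ^ 2 / (4 * y * m ^ 3) + ((1 - q) ^ 2 + 2 * q * (3 - q) * y) / (4 * m ^ 3)
      - (3 + 2 * q) / (4 * m ^ 2) = N / (4 * y * m ^ 3) := by
    field_simp; rw [hm]; ring
  have hT_add : (1 - q) ^ 2 / (4 * y * m ^ 3) + ((1 - q) ^ 2 + 2 * q * (3 - q) * y) / (4 * m ^ 3)
      + (3 + 2 * q) / (4 * m ^ 2) = D / (4 * y * m ^ 3) := by
    field_simp; rw [hm]; ring
  rw [abs_sub_le_iff]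
  constructor <;> linarith

/-- Pointwise bound of the perturbation `F(S(x)) = 1/(4S(x)²) − θ(S(x))`. -/
theorem statement5 (q : ℝ) (hq0 : 0 ≤ q) (hq1 : q < 1)
    (x : ℝ) (hx : x ∈ Set.Ico (0:ℝ) 1) :
    |1 / (4 * Sfun q x ^ 2) - Tfun q x| ≤ (3 + 2 * q) / (4 * (1 - q * x^2)^2) := by
  obtain ⟨hx0, hx1⟩ := hx
  obtain ⟨hlow, hup⟩ := sq_Sfun_bounds hq0 hq1.le ⟨hx0, hx1.le⟩
  exact abs_one_div_four_mul_sub_le hq0 hq1.le (by nlinarith) (by nlinarith) (by ring) hlow hup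
end

section
/- Let n ≥ 2 be an even integer and let y : (−1,1) → ℝ be a C² solution of the Legendre differential equation (1−x²)y″(x) − 2x·y′(x) + n(n+1)·y(x) = 0. Then for every x ∈ [0,1), √(1−x²)·y(x)² ≤ y(0)² + (y′(0)/(n + 1/2))². -/
open Real Set MeasureTheory

/-!
For the Legendre equation with parameter `μ > −½` (here `μ = n(n+1)`) put
`p = (t/2)·y − (1−t²)·y′` and `d = (μ+½)(1−t²) + t²/4`. The equation gives
`p′ = (μ+½)·y + (t/2)·y′`, and with this the Sonin-type energy `E = √(1−t²)·(y² + p²/d)`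
satisfies `E′ = −t·p² / (2√(1−t²)·d²) ≤ 0` on `[0,1)`. Hence
`√(1−x²)·y(x)² ≤ E(x) ≤ E(0) = y(0)² + y′(0)²/(μ+½)`, and `μ + ½ ≥ (n+½)²`.
-/

noncomputable def legendreFlux (y : ℝ → ℝ) (t : ℝ) : ℝ := t / 2 * y t - (1 - t ^ 2) * deriv y t

noncomputable def legendreWeight (μ t : ℝ) : ℝ := (μ + 1 / 2) * (1 - t ^ 2) + t ^ 2 / 4

noncomputable def legendreEnergy (μ : ℝ) (y : ℝ → ℝ) (t : ℝ) : ℝ :=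
  √(1 - t ^ 2) * (y t ^ 2 + legendreFlux y t ^ 2 / legendreWeight μ t)

lemma legendreWeight_pos {μ t : ℝ} (hμ : -1 / 2 < μ) (ht : t ^ 2 < 1) :
    0 < legendreWeight μ t :=
  add_pos_of_pos_of_nonneg (mul_pos (by linarith) (by linarith)) (by positivity)

lemma hasDerivAt_legendreWeight (μ t : ℝ) :
    HasDerivAt (legendreWeight μ) (-(2 * t) * (μ + 1 / 4)) t := by
  have := (((hasDerivAt_pow 2 t).const_sub 1).const_mul (μ + 1 / 2)).add
    ((hasDerivAt_pow 2 t).div_const 4)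
  exact this.congr_deriv (by push_cast; ring)

lemma hasDerivAt_legendreFlux {μ t : ℝ} {y : ℝ → ℝ} (hy : DifferentiableAt ℝ y t)
    (hy' : DifferentiableAt ℝ (deriv y) t)
    (hode : (1 - t ^ 2) * deriv (deriv y) t - 2 * t * deriv y t + μ * y t = 0) :
    HasDerivAt (legendreFlux y) ((μ + 1 / 2) * y t + t / 2 * deriv y t) t := by
  have := (((hasDerivAt_id t).div_const 2).mul hy.hasDerivAt).sub
    (((hasDerivAt_pow 2 t).const_sub 1).mul hy'.hasDerivAt)
  exact this.congr_deriv (by simp only [id_eq]; push_cast; linear_combination -hode)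

lemma hasDerivAt_legendreEnergy {μ t : ℝ} {y : ℝ → ℝ} (hμ : -1 / 2 < μ) (ht : t ^ 2 < 1)
    (hy : DifferentiableAt ℝ y t) (hy' : DifferentiableAt ℝ (deriv y) t)
    (hode : (1 - t ^ 2) * deriv (deriv y) t - 2 * t * deriv y t + μ * y t = 0) :
    HasDerivAt (legendreEnergy μ y)
      (-(t * legendreFlux y t ^ 2) / (2 * √(1 - t ^ 2) * legendreWeight μ t ^ 2)) t := by
  have hd0 : legendreWeight μ t ≠ 0 := (legendreWeight_pos hμ ht).ne'
  have hsqrt := ((hasDerivAt_pow 2 t).const_sub 1).sqrt (by linarith : (1 : ℝ) - t ^ 2 ≠ 0)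
  have hG := (hy.hasDerivAt.pow 2).add
    (((hasDerivAt_legendreFlux hy hy' hode).pow 2).div (hasDerivAt_legendreWeight μ t) hd0)
  refine (hsqrt.mul hG).congr_deriv ?_
  simp only [Pi.add_apply, Pi.div_apply, Pi.pow_apply]
  push_cast
  set s := √(1 - t ^ 2)
  have hs : s ^ 2 = 1 - t ^ 2 := Real.sq_sqrt (by linarith)
  have hs0 : s ≠ 0 := (Real.sqrt_pos.2 (by linarith)).ne'
  field_simp
  rw [hs, legendreFlux, legendreWeight]
  ring

lemma legendreEnergy_antitoneOn {μ : ℝ} {y : ℝ → ℝ} (hμ : -1 / 2 < μ)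
    (hy : ContDiffOn ℝ 2 y (Ioo (-1) 1))
    (hode : ∀ x ∈ Ioo (-1 : ℝ) 1,
      (1 - x ^ 2) * deriv (deriv y) x - 2 * x * deriv y x + μ * y x = 0) :
    AntitoneOn (legendreEnergy μ y) (Ico 0 1) := by
  have hy' : ContDiffOn ℝ 1 (deriv y) (Ioo (-1) 1) := hy.deriv_of_isOpen isOpen_Ioo (by norm_num)
  have hderiv : ∀ t ∈ Ico (0 : ℝ) 1, HasDerivAt (legendreEnergy μ y)
      (-(t * legendreFlux y t ^ 2) / (2 * √(1 - t ^ 2) * legendreWeight μ t ^ 2)) t := by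
    intro t ht
    have htI : t ∈ Ioo (-1 : ℝ) 1 := ⟨by linarith [ht.1], ht.2⟩
    have hnhds := isOpen_Ioo.mem_nhds htI
    exact hasDerivAt_legendreEnergy hμ (by nlinarith [ht.1, ht.2])
      ((hy.differentiableOn (by norm_num)).differentiableAt hnhds)
      ((hy'.differentiableOn one_ne_zero).differentiableAt hnhds) (hode t htI)
  refine antitoneOn_of_hasDerivWithinAt_nonpos (convex_Ico 0 1)
    (fun t ht ↦ (hderiv t ht).continuousAt.continuousWithinAt)
    (fun t ht ↦ (hderiv t (interior_subset ht)).hasDerivWithinAt) fun t ht ↦ ?_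
  rw [interior_Ico] at ht
  have : 0 ≤ t * legendreFlux y t ^ 2 := mul_nonneg ht.1.le (sq_nonneg _)
  exact div_nonpos_of_nonpos_of_nonneg (neg_nonpos.2 this) (by positivity)

lemma sqrt_one_sub_sq_mul_sq_le_legendreEnergy {μ x : ℝ} (hμ : -1 / 2 < μ) (hx : x ^ 2 < 1)
    (y : ℝ → ℝ) : √(1 - x ^ 2) * y x ^ 2 ≤ legendreEnergy μ y x := by
  have := (legendreWeight_pos hμ hx).le
  unfold legendreEnergy
  gcongr
  exact le_add_of_nonneg_right (by positivity)

lemma legendreEnergy_zero (μ : ℝ) (y : ℝ → ℝ) :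
    legendreEnergy μ y 0 = y 0 ^ 2 + deriv y 0 ^ 2 / (μ + 1 / 2) := by
  simp [legendreEnergy, legendreFlux, legendreWeight]

theorem sqrt_one_sub_sq_mul_sq_le_of_legendre {μ : ℝ} {y : ℝ → ℝ} (hμ : -1 / 2 < μ)
    (hy : ContDiffOn ℝ 2 y (Ioo (-1) 1))
    (hode : ∀ x ∈ Ioo (-1 : ℝ) 1,
      (1 - x ^ 2) * deriv (deriv y) x - 2 * x * deriv y x + μ * y x = 0)
    {x : ℝ} (hx : x ∈ Ico 0 1) :
    √(1 - x ^ 2) * y x ^ 2 ≤ y 0 ^ 2 + deriv y 0 ^ 2 / (μ + 1 / 2) :=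
  calc √(1 - x ^ 2) * y x ^ 2
      ≤ legendreEnergy μ y x :=
        sqrt_one_sub_sq_mul_sq_le_legendreEnergy hμ (by nlinarith [hx.1, hx.2]) y
    _ ≤ legendreEnergy μ y 0 :=
        legendreEnergy_antitoneOn hμ hy hode (left_mem_Ico.2 one_pos) hx hx.1
    _ = y 0 ^ 2 + deriv y 0 ^ 2 / (μ + 1 / 2) := legendreEnergy_zero μ y

theorem statement19_general (n : ℕ) (y : ℝ → ℝ)
    (hy : ContDiffOn ℝ 2 y (Set.Ioo (-1) 1))
    (hode : ∀ x ∈ Set.Ioo (-1:ℝ) 1,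
      (1 - x^2) * deriv (deriv y) x - 2 * x * deriv y x + (n : ℝ) * (n + 1) * y x = 0) :
    ∀ x ∈ Set.Ico (0:ℝ) 1,
      Real.sqrt (1 - x^2) * y x ^ 2 ≤ y 0 ^ 2 + (deriv y 0 / ((n : ℝ) + 1/2))^2 := by
  intro x hx
  have hμ : -1 / 2 < (n : ℝ) * (n + 1) := by linarith [show (0 : ℝ) ≤ n * (n + 1) by positivity]
  have hsq : ((n : ℝ) + 1 / 2) ^ 2 ≤ (n : ℝ) * (n + 1) + 1 / 2 := by nlinarith
  calc √(1 - x ^ 2) * y x ^ 2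
      ≤ y 0 ^ 2 + deriv y 0 ^ 2 / ((n : ℝ) * (n + 1) + 1 / 2) :=
        sqrt_one_sub_sq_mul_sq_le_of_legendre hμ hy hode hx
    _ ≤ y 0 ^ 2 + (deriv y 0 / ((n : ℝ) + 1 / 2)) ^ 2 := by
        rw [div_pow]
        gcongr

/-- A priori bound for solutions of the Legendre differential equation, for even `n ≥ 2`. -/
theorem statement19 (n : ℕ) (hn : 2 ≤ n) (hne : Even n) (y : ℝ → ℝ)
    (hy : ContDiffOn ℝ 2 y (Set.Ioo (-1) 1))
    (hode : ∀ x ∈ Set.Ioo (-1:ℝ) 1,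
      (1 - x^2) * deriv (deriv y) x - 2 * x * deriv y x + (n : ℝ) * (n + 1) * y x = 0) :
    ∀ x ∈ Set.Ico (0:ℝ) 1,
      Real.sqrt (1 - x^2) * y x ^ 2 ≤ y 0 ^ 2 + (deriv y 0 / ((n : ℝ) + 1/2))^2 :=
  statement19_general n y hy hode
end
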